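/- arXiv:1001.5024 — 2 statements merged into one kernel-verified Lean document; each statement's English description precedes it below -/
import Mathlib

section
/- Let f ∈ ℂ[λ, λ⁻¹] be a Laurent polynomial, ε ∈ {1, −1}, and N a nonnegative integer. Suppose that f(−λ) = ε·f(λ) as Laurent polynomials, and that the holomorphic function on ℂ∖{0} defined by f vanishes at λ = 1 together with its first N derivatives (i.e. f⁽ⁿ⁾(1) = 0 for 0 ≤ n ≤ N). Then f is divisible by (λ − λ⁻¹)^{N+1} in ℂ[λ, λ⁻¹]; equivalently, λ^{N+1}·f is divisible by (λ² − 1)^{N+1}. -/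
open Polynomial Filter Topology

/-- Iterated derivatives of a Laurent polynomial function, away from `0`. -/
lemma laurent_iteratedDeriv (a : ℤ →₀ ℂ) (n : ℕ) :
    ∀ z : ℂ, z ≠ 0 → iteratedDeriv n (fun z : ℂ => ∑ m ∈ a.support, a m * z ^ m) z
      = ∑ m ∈ a.support, a m * (descPochhammer ℂ n).eval (m : ℂ) * z ^ ((m : ℤ) - n) := by
  induction n with
  | zero =>
    intro z hz
    simp [iteratedDeriv_zero]
  | succ n ih =>
    intro z hz
    rw [iteratedDeriv_succ]
    have hev : iteratedDeriv n (fun z : ℂ => ∑ m ∈ a.support, a m * z ^ m)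
        =ᶠ[𝓝 z] fun w : ℂ => ∑ m ∈ a.support,
          a m * (descPochhammer ℂ n).eval (m : ℂ) * w ^ ((m : ℤ) - n) := by
      filter_upwards [eventually_ne_nhds hz] with w hw using ih w hw
    rw [hev.deriv_eq]
    have hder : HasDerivAt (fun w : ℂ => ∑ m ∈ a.support,
        a m * (descPochhammer ℂ n).eval (m : ℂ) * w ^ ((m : ℤ) - n))
        (∑ m ∈ a.support, a m * (descPochhammer ℂ n).eval (m : ℂ)
          * (((m : ℤ) - n : ℤ) * z ^ ((m : ℤ) - n - 1))) z := by
      refine HasDerivAt.fun_sum fun m _ => ?_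
      exact (hasDerivAt_zpow ((m : ℤ) - n) z (Or.inl hz)).const_mul _
    rw [hder.deriv]
    refine Finset.sum_congr rfl fun m _ => ?_
    have hexp : (m : ℤ) - n - 1 = (m : ℤ) - ((n : ℕ) + 1 : ℕ) := by push_cast; ring
    rw [hexp, descPochhammer_succ_right, eval_mul, eval_sub, eval_X, eval_natCast]
    push_cast
    ring

/-- The key linear functional vanishing lemma. -/
lemma laurent_functional (a : ℤ →₀ ℂ) (N : ℕ)
    (h : ∀ n : ℕ, n ≤ N → ∑ m ∈ a.support, a m * (descPochhammer ℂ n).eval (m : ℂ) = 0) :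
    ∀ d : ℕ, d ≤ N → ∀ q : Polynomial ℂ, q.natDegree ≤ d →
      ∑ m ∈ a.support, a m * q.eval (m : ℂ) = 0 := by
  intro d
  induction d with
  | zero =>
    intro _ q hq
    have hq' : q = C (q.coeff 0) := Polynomial.eq_C_of_natDegree_le_zero hq
    have h0 := h 0 (Nat.zero_le N)
    simp only [descPochhammer_zero, eval_one, mul_one] at h0
    rw [hq']
    simp only [eval_C]
    rw [← Finset.sum_mul, h0, zero_mul]
  | succ d ihd =>
    intro hdN q hq
    set c := q.coeff (d + 1) with hc
    set r := q - C c * descPochhammer ℂ (d + 1) with hr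
    have hmon : (descPochhammer ℂ (d + 1)).Monic := monic_descPochhammer ℂ (d + 1)
    have hdeg : (descPochhammer ℂ (d + 1)).natDegree = d + 1 := descPochhammer_natDegree ℂ (d + 1)
    have hrdeg : r.natDegree ≤ d := by
      rw [Polynomial.natDegree_le_iff_coeff_eq_zero]
      intro k hk
      rcases eq_or_lt_of_le (Nat.succ_le_of_lt hk) with hk' | hk'
      · rw [hr]
        simp only [Polynomial.coeff_sub, Polynomial.coeff_C_mul]
        rw [← hk']
        have : (descPochhammer ℂ (d + 1)).coeff (d + 1) = 1 := by
          have := hmon.coeff_natDegree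
          rwa [hdeg] at this
        rw [this, mul_one, ← hc, sub_self]
      · rw [hr]
        simp only [Polynomial.coeff_sub, Polynomial.coeff_C_mul]
        rw [Polynomial.coeff_eq_zero_of_natDegree_lt (lt_of_le_of_lt hq hk'),
          Polynomial.coeff_eq_zero_of_natDegree_lt (by rw [hdeg]; exact hk'), mul_zero, sub_self]
    have h1 := ihd (le_trans (Nat.le_succ d) hdN) r hrdeg
    have h2 := h (d + 1) hdN
    have hq2 : q = r + C c * descPochhammer ℂ (d + 1) := by rw [hr]; ring
    calc ∑ m ∈ a.support, a m * q.eval (m : ℂ)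
        = ∑ m ∈ a.support, (a m * r.eval (m : ℂ)
            + c * (a m * (descPochhammer ℂ (d + 1)).eval (m : ℂ))) := by
          refine Finset.sum_congr rfl fun m _ => ?_
          rw [hq2]
          simp only [eval_add, eval_mul, eval_C]
          ring
      _ = (∑ m ∈ a.support, a m * r.eval (m : ℂ))
            + c * ∑ m ∈ a.support, a m * (descPochhammer ℂ (d + 1)).eval (m : ℂ) := by
          rw [Finset.sum_add_distrib, Finset.mul_sum]
      _ = 0 := by rw [h1, h2, mul_zero, add_zero]

/-- Let `f(λ) = Σₙ aₙ λⁿ` be a Laurent polynomial (given by its finitely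
supported coefficients `a : ℤ →₀ ℂ`), satisfying `f(−λ) = ε f(λ)` as Laurent
polynomials (i.e. `(−1)ⁿ aₙ = ε aₙ` for all `n`) with `ε = ±1`, and suppose
`f⁽ⁿ⁾(1) = 0` for `0 ≤ n ≤ N`.  Then `f` is divisible by `(λ − λ⁻¹)^{N+1}`
in `ℂ[λ, λ⁻¹]`: there is a Laurent polynomial `g` with
`f(λ) = (λ − λ⁻¹)^{N+1} g(λ)` for all `λ ≠ 0`. -/
theorem laurent_divisibility (a : ℤ →₀ ℂ) (ε : ℂ) (hε : ε = 1 ∨ ε = -1) (N : ℕ)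
    (hparity : ∀ n : ℤ, (-1 : ℂ) ^ n * a n = ε * a n)
    (hvanish : ∀ n : ℕ, n ≤ N →
      iteratedDeriv n (fun z : ℂ => ∑ m ∈ a.support, a m * z ^ m) 1 = 0) :
    ∃ b : ℤ →₀ ℂ, ∀ z : ℂ, z ≠ 0 →
      ∑ m ∈ a.support, a m * z ^ m
        = (z - z⁻¹) ^ (N + 1) * ∑ m ∈ b.support, b m * z ^ m := by
  classical
  -- coefficient conditions from vanishing derivatives
  have hL0 : ∀ n : ℕ, n ≤ N →
      ∑ m ∈ a.support, a m * (descPochhammer ℂ n).eval (m : ℂ) = 0 := by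
    intro n hn
    have hv := hvanish n hn
    rw [laurent_iteratedDeriv a n 1 one_ne_zero] at hv
    simpa [one_zpow] using hv
  have hLq : ∀ q : Polynomial ℂ, q.natDegree ≤ N →
      ∑ m ∈ a.support, a m * q.eval (m : ℂ) = 0 :=
    laurent_functional a N hL0 N le_rfl
  -- the shift
  set M : ℕ := N + 1 + a.support.sup (fun m => (-m).toNat) with hMdef
  have hM : ∀ m ∈ a.support, ((N : ℤ) + 1) ≤ m + M := by
    intro m hm
    have h1 : (-m).toNat ≤ a.support.sup (fun m : ℤ => (-m).toNat) :=
      Finset.le_sup (f := fun m : ℤ => (-m).toNat) hm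
    have h2 : M = N + 1 + a.support.sup (fun m : ℤ => (-m).toNat) := hMdef
    omega
  have hM0 : ∀ m ∈ a.support, (0 : ℤ) ≤ m + M := fun m hm => le_trans (by positivity) (hM m hm)
  -- the polynomial
  set P : Polynomial ℂ := ∑ m ∈ a.support, Polynomial.C (a m) * Polynomial.X ^ (m + M).toNat
    with hPdef
  have hPderiv : ∀ n : ℕ, derivative^[n] P
      = ∑ m ∈ a.support, Polynomial.C (a m * (((m + M).toNat).descFactorial n : ℂ))
          * Polynomial.X ^ ((m + M).toNat - n) := by
    intro n
    rw [hPdef, Polynomial.iterate_derivative_sum]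
    refine Finset.sum_congr rfl fun m _ => ?_
    rw [Polynomial.iterate_derivative_C_mul, Polynomial.iterate_derivative_X_pow_eq_C_mul,
      ← mul_assoc, ← Polynomial.C_mul]
  -- descFactorial as evaluation of a shifted descPochhammer
  have hdf : ∀ n : ℕ, ∀ m ∈ a.support,
      ((((m + M).toNat).descFactorial n : ℕ) : ℂ)
        = ((descPochhammer ℂ n).comp (Polynomial.X + Polynomial.C (M : ℂ))).eval (m : ℂ) := by
    intro n m hm
    rw [Polynomial.eval_comp, eval_add, eval_X, eval_C,
      ← descPochhammer_eval_eq_descFactorial]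
    congr 1
    have h0 : ((m + (M : ℤ)).toNat : ℤ) = m + M := Int.toNat_of_nonneg (hM0 m hm)
    rw [← Int.cast_natCast (R := ℂ), h0]
    push_cast
    ring
  have hcompdeg : ∀ n : ℕ,
      ((descPochhammer ℂ n).comp (Polynomial.X + Polynomial.C (M : ℂ))).natDegree = n := by
    intro n
    rw [Polynomial.natDegree_comp, descPochhammer_natDegree, Polynomial.natDegree_X_add_C, mul_one]
  -- vanishing of iterated derivatives of P at 1
  have hroot1 : ∀ n : ℕ, n ≤ N → (derivative^[n] P).IsRoot 1 := by
    intro n hn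
    have : (derivative^[n] P).eval 1
        = ∑ m ∈ a.support, a m * ((((m + M).toNat).descFactorial n : ℕ) : ℂ) := by
      rw [hPderiv n, Polynomial.eval_finset_sum]
      refine Finset.sum_congr rfl fun m _ => ?_
      simp [Polynomial.eval_mul, Polynomial.eval_pow]
    rw [Polynomial.IsRoot, this]
    rw [Finset.sum_congr rfl fun m hm => by rw [hdf n m hm]]
    exact hLq _ (by rw [hcompdeg n]; exact hn)
  -- vanishing of iterated derivatives of P at -1
  have hroot2 : ∀ n : ℕ, n ≤ N → (derivative^[n] P).IsRoot (-1) := by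
    intro n hn
    have hKn : ∀ m ∈ a.support, n ≤ (m + M).toNat := by
      intro m hm
      have := hM m hm
      omega
    have hterm : ∀ m ∈ a.support,
        a m * ((((m + M).toNat).descFactorial n : ℕ) : ℂ) * (-1 : ℂ) ^ ((m + M).toNat - n)
          = (ε * ((-1 : ℂ) ^ M * (-1 : ℂ) ^ n))
              * (a m * ((((m + M).toNat).descFactorial n : ℕ) : ℂ)) := by
      intro m hm
      have hK := hKn m hm
      have hs1 : (-1 : ℂ) ^ ((m + M).toNat - n) * (-1 : ℂ) ^ n = (-1 : ℂ) ^ ((m + M).toNat) := by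
        rw [← pow_add]
        congr 1
        omega
      have hsq : (-1 : ℂ) ^ n * (-1 : ℂ) ^ n = 1 := by
        rw [← pow_add, ← two_mul, pow_mul]
        norm_num
      have hs2 : (-1 : ℂ) ^ ((m + M).toNat - n) = (-1 : ℂ) ^ ((m + M).toNat) * (-1 : ℂ) ^ n := by
        calc (-1 : ℂ) ^ ((m + M).toNat - n)
            = (-1 : ℂ) ^ ((m + M).toNat - n) * ((-1 : ℂ) ^ n * (-1 : ℂ) ^ n) := by
              rw [hsq, mul_one]
          _ = (-1 : ℂ) ^ ((m + M).toNat) * (-1 : ℂ) ^ n := by rw [← mul_assoc, hs1]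
      have hzp : (-1 : ℂ) ^ ((m + M).toNat) = (-1 : ℂ) ^ (m : ℤ) * (-1 : ℂ) ^ (M : ℕ) := by
        rw [← zpow_natCast (-1 : ℂ) ((m + M).toNat), Int.toNat_of_nonneg (hM0 m hm),
          zpow_add₀ (by norm_num : (-1 : ℂ) ≠ 0), zpow_natCast]
      have hpar : a m * (-1 : ℂ) ^ (m : ℤ) = ε * a m := by
        rw [mul_comm]; exact hparity m
      rw [hs2, hzp]
      calc a m * ((((m + M).toNat).descFactorial n : ℕ) : ℂ)
            * ((-1 : ℂ) ^ (m : ℤ) * (-1 : ℂ) ^ (M : ℕ) * (-1 : ℂ) ^ n)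
          = (a m * (-1 : ℂ) ^ (m : ℤ)) * ((((m + M).toNat).descFactorial n : ℕ) : ℂ)
              * ((-1 : ℂ) ^ (M : ℕ) * (-1 : ℂ) ^ n) := by ring
        _ = (ε * a m) * ((((m + M).toNat).descFactorial n : ℕ) : ℂ)
              * ((-1 : ℂ) ^ (M : ℕ) * (-1 : ℂ) ^ n) := by rw [hpar]
        _ = (ε * ((-1 : ℂ) ^ M * (-1 : ℂ) ^ n))
              * (a m * ((((m + M).toNat).descFactorial n : ℕ) : ℂ)) := by ring
    have heval : (derivative^[n] P).eval (-1)
        = ∑ m ∈ a.support, a m * ((((m + M).toNat).descFactorial n : ℕ) : ℂ)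
            * (-1 : ℂ) ^ ((m + M).toNat - n) := by
      rw [hPderiv n, Polynomial.eval_finset_sum]
      refine Finset.sum_congr rfl fun m _ => ?_
      simp [Polynomial.eval_mul, Polynomial.eval_pow]
    rw [Polynomial.IsRoot, heval, Finset.sum_congr rfl hterm, ← Finset.mul_sum]
    rw [Finset.sum_congr rfl fun m hm => by rw [hdf n m hm]]
    rw [hLq _ (by rw [hcompdeg n]; exact hn), mul_zero]
  -- divisibility
  by_cases hP0 : P = 0
  · refine ⟨0, fun z hz => ?_⟩
    have hPz : ∑ m ∈ a.support, a m * z ^ m = 0 := by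
      have hev : P.eval z = ∑ m ∈ a.support, a m * z ^ ((m + M).toNat) := by
        rw [hPdef, Polynomial.eval_finset_sum]
        refine Finset.sum_congr rfl fun m _ => ?_
        simp [Polynomial.eval_mul, Polynomial.eval_pow]
      have h0 : ∑ m ∈ a.support, a m * z ^ ((m + M).toNat) = 0 := by
        rw [← hev, hP0, Polynomial.eval_zero]
      have : ∑ m ∈ a.support, a m * z ^ (m : ℤ)
          = z ^ (-(M : ℤ)) * ∑ m ∈ a.support, a m * z ^ ((m + M).toNat) := by
        rw [Finset.mul_sum]
        refine Finset.sum_congr rfl fun m hm => ?_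
        rw [← zpow_natCast z ((m + M).toNat), Int.toNat_of_nonneg (hM0 m hm),
          ← mul_assoc, mul_comm (z ^ (-(M:ℤ))) (a m), mul_assoc, ← zpow_add₀ hz]
        congr 2
        ring
      rw [this, h0, mul_zero]
    rw [hPz]
    simp
  · have hlt1 : N < P.rootMultiplicity 1 := by
      refine Polynomial.lt_rootMultiplicity_of_isRoot_iterate_derivative_of_mem_nonZeroDivisors'
        hP0 hroot1 fun m _ hm0 => ?_
      exact mem_nonZeroDivisors_of_ne_zero (by exact_mod_cast hm0)
    have hlt2 : N < P.rootMultiplicity (-1) := by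
      refine Polynomial.lt_rootMultiplicity_of_isRoot_iterate_derivative_of_mem_nonZeroDivisors'
        hP0 hroot2 fun m _ hm0 => ?_
      exact mem_nonZeroDivisors_of_ne_zero (by exact_mod_cast hm0)
    have hdvd1 : (Polynomial.X - Polynomial.C (1 : ℂ)) ^ (N + 1) ∣ P :=
      (pow_dvd_pow _ hlt1).trans (P.pow_rootMultiplicity_dvd 1)
    have hdvd2 : (Polynomial.X - Polynomial.C (-1 : ℂ)) ^ (N + 1) ∣ P :=
      (pow_dvd_pow _ hlt2).trans (P.pow_rootMultiplicity_dvd (-1))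
    have hcop : IsCoprime (Polynomial.X - Polynomial.C (1 : ℂ))
        (Polynomial.X - Polynomial.C (-1 : ℂ)) := by
      apply Polynomial.isCoprime_X_sub_C_of_isUnit_sub
      norm_num
    have hdvd : ((Polynomial.X ^ 2 - 1 : Polynomial ℂ)) ^ (N + 1) ∣ P := by
      have := (hcop.pow (m := N + 1) (n := N + 1)).mul_dvd hdvd1 hdvd2
      rwa [← mul_pow, show (Polynomial.X - Polynomial.C (1 : ℂ))
        * (Polynomial.X - Polynomial.C (-1 : ℂ)) = Polynomial.X ^ 2 - 1 by
          simp [Polynomial.C_1]; ring] at this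
    obtain ⟨Q, hQ⟩ := hdvd
    -- build b
    have hinj : Function.Injective (fun i : ℕ => (i : ℤ) + (N + 1) - M) := by
      intro i j hij
      simpa using hij
    refine ⟨Finsupp.embDomain ⟨fun i : ℕ => (i : ℤ) + (N + 1) - M, hinj⟩ Q.toFinsupp.coeff,
      fun z hz => ?_⟩
    -- evaluate the b-sum
    have hbsum : ∑ m ∈ (Finsupp.embDomain ⟨fun i : ℕ => (i : ℤ) + (N + 1) - M, hinj⟩
          Q.toFinsupp.coeff).support,
          (Finsupp.embDomain ⟨fun i : ℕ => (i : ℤ) + (N + 1) - M, hinj⟩ Q.toFinsupp.coeff) m * z ^ m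
        = z ^ ((N : ℤ) + 1 - M) * Q.eval z := by
      rw [Finsupp.support_embDomain, Finset.sum_map]
      have hstep : ∀ i ∈ Q.toFinsupp.coeff.support,
          (Finsupp.embDomain ⟨fun i : ℕ => (i : ℤ) + (N + 1) - M, hinj⟩ Q.toFinsupp.coeff)
              ((⟨fun i : ℕ => (i : ℤ) + (N + 1) - M, hinj⟩ : ℕ ↪ ℤ) i)
              * z ^ ((⟨fun i : ℕ => (i : ℤ) + (N + 1) - M, hinj⟩ : ℕ ↪ ℤ) i)
            = z ^ ((N : ℤ) + 1 - M) * (Q.coeff i * z ^ i) := by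
        intro i _
        rw [Finsupp.embDomain_apply_self, Polynomial.toFinsupp_apply]
        simp only [Function.Embedding.coeFn_mk]
        have hzz : z ^ ((i : ℤ) + (N + 1) - M) = z ^ (i : ℕ) * z ^ ((N : ℤ) + 1 - M) := by
          rw [← zpow_natCast z i, ← zpow_add₀ hz]
          congr 1
          push_cast
          ring
        rw [hzz]
        ring
      rw [Finset.sum_congr rfl hstep, ← Finset.mul_sum]
      congr 1
      rw [Polynomial.eval_eq_sum, Polynomial.sum_def, Polynomial.support_toFinsupp]
    rw [hbsum]
    -- evaluate the a-sum
    have hasum : ∑ m ∈ a.support, a m * z ^ (m : ℤ) = z ^ (-(M : ℤ)) * P.eval z := by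
      have hev : P.eval z = ∑ m ∈ a.support, a m * z ^ ((m + M).toNat) := by
        rw [hPdef, Polynomial.eval_finset_sum]
        refine Finset.sum_congr rfl fun m _ => ?_
        simp [Polynomial.eval_mul, Polynomial.eval_pow]
      rw [hev, Finset.mul_sum]
      refine Finset.sum_congr rfl fun m hm => ?_
      rw [← zpow_natCast z ((m + M).toNat), Int.toNat_of_nonneg (hM0 m hm),
        ← mul_assoc, mul_comm (z ^ (-(M:ℤ))) (a m), mul_assoc, ← zpow_add₀ hz]
      congr 2
      ring
    rw [hasum, hQ]
    have hPe : ((Polynomial.X ^ 2 - 1 : Polynomial ℂ) ^ (N + 1) * Q).eval z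
        = (z ^ 2 - 1) ^ (N + 1) * Q.eval z := by
      simp [Polynomial.eval_mul, Polynomial.eval_pow]
    rw [hPe]
    -- final algebraic identity
    have hkey : (z - z⁻¹) ^ (N + 1) = (z ^ 2 - 1) ^ (N + 1) * z ^ (-((N : ℤ) + 1)) := by
      have h1 : z - z⁻¹ = (z ^ 2 - 1) * z⁻¹ := by
        field_simp
      rw [h1, mul_pow]
      congr 1
      rw [← zpow_natCast z⁻¹ (N + 1), inv_zpow, ← zpow_neg]
      norm_num
    rw [hkey]
    have hz2 : z ^ (-((N : ℤ) + 1)) * z ^ ((N : ℤ) + 1 - (M : ℤ)) = z ^ (-(M : ℤ)) := by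
      rw [← zpow_add₀ hz]
      congr 1
      ring
    rw [← hz2]
    ring
end

section
/- Let L be a module over ℤ with a symmetric bilinear form B : L × L → ℤ, and let K ∈ L be characteristic, i.e. B(x,x) ≡ B(x,K) (mod 2) for all x ∈ L. Let χ_h be an integer and let s : L → ℂ be a finitely supported function such that s(c) = 0 unless c − K ∈ 2L, and s(−c) = (−1)^{χ_h}·s(c) for all c ∈ L. For α ∈ L define F(α) := Σ_c (−1)^{B(K,K+c)/2}·s(c)·exp(B(c,α)), where the sum is over the support of s (note B(K,K+c) is even for every c in the support, so the sign is well defined). Then F(−α) = (−1)^{χ_h − B(K,K)}·F(α) for every α ∈ L. -/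
private lemma neg_one_zpow_congr (a b : ℤ) (h : Even (a - b)) : (-1 : ℂ) ^ a = (-1 : ℂ) ^ b := by
  obtain ⟨k, hk⟩ := h
  have ha : a = b + 2 * k := by linarith
  rw [ha, zpow_add₀ (by norm_num : (-1 : ℂ) ≠ 0), zpow_mul]
  norm_num

/-- Parity of the weighted Seiberg–Witten generating function: if `K` is
characteristic, `s` is finitely supported on classes `≡ K mod 2L` with
`s(−c) = (−1)^{χ_h} s(c)`, then
`F(α) = Σ_c (−1)^{B(K,K+c)/2} s(c) exp(B(c,α))` satisfies
`F(−α) = (−1)^{χ_h − B(K,K)} F(α)`. -/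
theorem SW_generating_function_parity (L : Type*) [AddCommGroup L] [Module ℤ L]
    (B : L →ₗ[ℤ] L →ₗ[ℤ] ℤ) (hsym : ∀ x y : L, B x y = B y x)
    (K : L) (hK : ∀ x : L, B x x ≡ B x K [ZMOD 2])
    (χh : ℤ) (s : L → ℂ) (hfin : (Function.support s).Finite)
    (hsupp : ∀ c : L, s c ≠ 0 → ∃ v : L, c - K = 2 • v)
    (hconj : ∀ c : L, s (-c) = (-1 : ℂ) ^ χh * s c) (α : L) :
    (∑ᶠ c : L, (-1 : ℂ) ^ (B K (K + c) / 2) * s c * Complex.exp ((B c (-α) : ℂ)))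
      = (-1 : ℂ) ^ (χh - B K K)
        * ∑ᶠ c : L, (-1 : ℂ) ^ (B K (K + c) / 2) * s c * Complex.exp ((B c α : ℂ)) := by
  have hne : (-1 : ℂ) ≠ 0 := by norm_num
  set G : L → ℂ := fun c => (-1 : ℂ) ^ (B K (K + c) / 2) * s c * Complex.exp ((B c α : ℂ)) with hG
  have hGfin : (Function.support G).Finite := by
    apply hfin.subset
    intro c hc
    simp only [Function.mem_support, hG] at hc ⊢
    intro h; apply hc; rw [h]; ring
  rw [mul_finsum _ _]
  apply finsum_eq_of_bijective (fun c => -c) (neg_involutive.bijective)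
  intro c
  by_cases hs : s c = 0
  · have hsn : s (-c) = 0 := by rw [hconj, hs, mul_zero]
    simp [hG, hs, hsn]
  · obtain ⟨v, hv⟩ := hsupp c hs
    have hc : c = K + (v + v) := by rw [two_smul] at hv; rw [← hv]; abel
    have h1 : B K (K + -c) / 2 = -(B K v) := by
      have h : K + -c = -(v + v) := by rw [hc]; abel
      rw [h, map_neg, map_add]
      omega
    have h2 : B K (K + c) / 2 = B K K + B K v := by
      have h : K + c = (K + K) + (v + v) := by rw [hc]; abel
      rw [h, map_add, map_add, map_add]
      omega
    show (-1 : ℂ) ^ (B K (K + c) / 2) * s c * Complex.exp ((B c (-α) : ℂ))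
        = (-1 : ℂ) ^ (χh - B K K) * G (-c)
    have hBc : ((B (-c)) α : ℂ) = ((B c (-α) : ℤ) : ℂ) := by push_cast; simp
    rw [hG]
    simp only
    rw [h1, h2, hconj, hBc]
    rw [show ((-1:ℂ) ^ (χh - B K K) * ((-1:ℂ) ^ (-(B K v)) * ((-1:ℂ) ^ χh * s c)
          * Complex.exp ((B c (-α) : ℂ))))
        = ((-1:ℂ) ^ (χh - B K K) * (-1:ℂ) ^ (-(B K v)) * (-1:ℂ) ^ χh)
          * (s c * Complex.exp ((B c (-α) : ℂ))) by ring,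
      show ((-1:ℂ) ^ (B K K + B K v) * s c * Complex.exp ((B c (-α) : ℂ)))
        = ((-1:ℂ) ^ (B K K + B K v)) * (s c * Complex.exp ((B c (-α) : ℂ))) by ring,
      ← zpow_add₀ hne, ← zpow_add₀ hne]
    congr 1
    exact neg_one_zpow_congr _ _ ⟨B K K + B K v - χh, by ring⟩
end
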